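/- arXiv:2007.08608 — 7 statements merged into one kernel-verified Lean document; each statement's English description precedes it below -/
import Mathlib

section
/- For any period n, cycle length a ≥ 1 with n + a ≤ T, and every real y, the averaged cumulative distribution functions of accumulated demands satisfy (1/a) · Σ_{k=1}^{a} φ_{n,k}(y) ≥ (1/(a+1)) · Σ_{k=1}^{a+1} φ_{n,k}(y). -/
open MeasureTheory ProbabilityTheory

/-- Accumulated demand `ξ_{n,k} = ξ_n + ⋯ + ξ_{n+k-1}`. -/
noncomputable def acc {Ω : Type*} (ξ : ℕ → Ω → ℝ) (n k : ℕ) (ω : Ω) : ℝ :=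
  ∑ i ∈ Finset.range k, ξ (n + i) ω

/-- Cumulative distribution function `φ_{n,k}(y) = P(ξ_{n,k} ≤ y)` of accumulated demand. -/
noncomputable def cdf {Ω : Type*} [MeasurableSpace Ω] (μ : Measure Ω) (ξ : ℕ → Ω → ℝ)
    (n k : ℕ) (y : ℝ) : ℝ :=
  (μ {ω | acc ξ n k ω ≤ y}).toReal

/-- Multi-period cost function
`L_{n,a}(y) = Σ_{k=1}^{a} (h·E[(y − ξ_{n,k})⁺] + p·E[(ξ_{n,k} − y)⁺])`. -/
noncomputable def Lmp {Ω : Type*} [MeasurableSpace Ω] (μ : Measure Ω) (h p : ℝ)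
    (ξ : ℕ → Ω → ℝ) (n a : ℕ) (y : ℝ) : ℝ :=
  ∑ k ∈ Finset.Icc 1 a,
    (h * ∫ ω, max (y - acc ξ n k ω) 0 ∂μ + p * ∫ ω, max (acc ξ n k ω - y) 0 ∂μ)

lemma acc_succ {Ω : Type*} (ξ : ℕ → Ω → ℝ) (n k : ℕ) (ω : Ω) :
    acc ξ n (k + 1) ω = acc ξ n k ω + ξ (n + k) ω :=
  Finset.sum_range_succ _ _

lemma cdf_antitone {Ω : Type*} [MeasurableSpace Ω] (μ : Measure Ω) [IsFiniteMeasure μ]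
    (ξ : ℕ → Ω → ℝ) (hpos : ∀ i, ∀ᵐ ω ∂μ, 0 ≤ ξ i ω) (n : ℕ) (y : ℝ) :
    Antitone fun k ↦ _root_.cdf μ ξ n k y := by
  refine antitone_nat_of_succ_le fun k ↦ ENNReal.toReal_mono (measure_ne_top μ _) ?_
  refine measure_mono_ae ?_
  filter_upwards [hpos (n + k)] with ω hξ hle
  change acc ξ n (k + 1) ω ≤ y at hle
  change acc ξ n k ω ≤ y
  rw [acc_succ] at hle
  linarith

lemma Antitone.avg_Icc_succ_le {K : Type*} [Field K] [LinearOrder K] [IsStrictOrderedRing K]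
    {f : ℕ → K} (hf : Antitone f) {a : ℕ} (ha : 1 ≤ a) :
    (1 / ((a : K) + 1)) * ∑ k ∈ Finset.Icc 1 (a + 1), f k ≤
      (1 / (a : K)) * ∑ k ∈ Finset.Icc 1 a, f k := by
  have ha0 : (0 : K) < a := by exact_mod_cast ha
  have hlast : (a : K) * f (a + 1) ≤ ∑ k ∈ Finset.Icc 1 a, f k := by
    calc (a : K) * f (a + 1) = ∑ _k ∈ Finset.Icc 1 a, f (a + 1) := by simp
      _ ≤ ∑ k ∈ Finset.Icc 1 a, f k :=
        Finset.sum_le_sum fun k hk ↦ hf (by simp at hk; omega)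
  rw [Finset.sum_Icc_succ_top (by omega), one_div_mul_eq_div, one_div_mul_eq_div,
    div_le_div_iff₀ (by positivity) ha0]
  linarith

theorem stmt1_general {Ω : Type*} [MeasurableSpace Ω] (μ : Measure Ω) [IsProbabilityMeasure μ]
    (ξ : ℕ → Ω → ℝ)
    (hpos : ∀ i, ∀ᵐ ω ∂μ, 0 ≤ ξ i ω)
    (n a : ℕ) (ha : 1 ≤ a) (y : ℝ) :
    (1 / ((a : ℝ) + 1)) * ∑ k ∈ Finset.Icc 1 (a + 1), cdf μ ξ n k y ≤
      (1 / (a : ℝ)) * ∑ k ∈ Finset.Icc 1 a, cdf μ ξ n k y :=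
  (cdf_antitone μ ξ hpos n y).avg_Icc_succ_le ha

/-- Proposition 1(b): the averaged cumulative distribution functions of accumulated
demands satisfy `(1/a)·Σ_{k=1}^{a} φ_{n,k}(y) ≥ (1/(a+1))·Σ_{k=1}^{a+1} φ_{n,k}(y)`. -/
theorem stmt1 {Ω : Type*} [MeasurableSpace Ω] (μ : Measure Ω) [IsProbabilityMeasure μ]
    (T : ℕ) (ξ : ℕ → Ω → ℝ)
    (hmeas : ∀ i, Measurable (ξ i)) (hint : ∀ i, Integrable (ξ i) μ)
    (hpos : ∀ i, ∀ᵐ ω ∂μ, 0 ≤ ξ i ω)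
    (hind : iIndepFun ξ μ)
    (n a : ℕ) (hn : 1 ≤ n) (ha : 1 ≤ a) (hna : n + a ≤ T) (y : ℝ) :
    (1 / ((a : ℝ) + 1)) * ∑ k ∈ Finset.Icc 1 (a + 1), cdf μ ξ n k y ≤
      (1 / (a : ℝ)) * ∑ k ∈ Finset.Icc 1 a, cdf μ ξ n k y :=
  stmt1_general μ ξ hpos n a ha y
end

section
/- For any period n and cycle length a ≥ 1 with n + a ≤ T, define the sets S_a = { y ∈ ℝ : Σ_{k=1}^{a} φ_{n,k}(y) ≥ a·p/(h+p) } and S_{a+1} = { y ∈ ℝ : Σ_{k=1}^{a+1} φ_{n,k}(y) ≥ (a+1)·p/(h+p) }. Then S_{a+1} ⊆ S_a; consequently, if S_{a+1} is nonempty and S_a is bounded below, then y_{n,a} = inf S_a ≤ inf S_{a+1} = y_{n,a+1}. -/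
open MeasureTheory ProbabilityTheory

/-! Since demands are nonnegative, `φ_{n,k}` decreases in `k`; so the `(a+1)`-st summand is the
smallest, and dropping it cannot lower the average of the `φ_{n,k}(y)`. -/

lemma acc_mono_of_nonneg {Ω : Type*} {ξ : ℕ → Ω → ℝ} {ω : Ω} (hξ : ∀ i, 0 ≤ ξ i ω) (n : ℕ)
    {k m : ℕ} (hkm : k ≤ m) : acc ξ n k ω ≤ acc ξ n m ω :=
  Finset.sum_le_sum_of_subset_of_nonneg (Finset.range_subset_range.2 hkm)
    fun i _ _ => hξ (n + i)

lemma cdf_anti_of_ae_nonneg {Ω : Type*} [MeasurableSpace Ω] (μ : Measure Ω) [IsFiniteMeasure μ]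
    {ξ : ℕ → Ω → ℝ} (hpos : ∀ i, ∀ᵐ ω ∂μ, 0 ≤ ξ i ω) (n : ℕ) {k m : ℕ} (hkm : k ≤ m)
    (y : ℝ) : cdf μ ξ n m y ≤ cdf μ ξ n k y := by
  refine ENNReal.toReal_mono (measure_ne_top μ _) (measure_mono_ae ?_)
  filter_upwards [ae_all_iff.2 hpos] with ω hω hm
  exact (acc_mono_of_nonneg hω n hkm).trans hm

lemma mul_le_sum_Icc_of_succ_mul_le_sum_Icc {f : ℕ → ℝ} {a : ℕ} {c : ℝ}
    (hf : ∀ k ∈ Finset.Icc 1 a, f (a + 1) ≤ f k)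
    (hc : ((a : ℝ) + 1) * c ≤ ∑ k ∈ Finset.Icc 1 (a + 1), f k) :
    (a : ℝ) * c ≤ ∑ k ∈ Finset.Icc 1 a, f k := by
  have hsplit : ∑ k ∈ Finset.Icc 1 (a + 1), f k = ∑ k ∈ Finset.Icc 1 a, f k + f (a + 1) :=
    Finset.sum_Icc_succ_top (by omega) f
  have hlast : (a : ℝ) * f (a + 1) ≤ ∑ k ∈ Finset.Icc 1 a, f k := by
    simpa using Finset.card_nsmul_le_sum _ f _ hf
  have ha : (0 : ℝ) ≤ a := a.cast_nonneg
  refine le_of_mul_le_mul_left ?_ (by positivity : (0 : ℝ) < a + 1)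
  nlinarith

theorem stmt2_general {Ω : Type*} [MeasurableSpace Ω] (μ : Measure Ω) [IsProbabilityMeasure μ]
    (ξ : ℕ → Ω → ℝ)
    (hpos : ∀ i, ∀ᵐ ω ∂μ, 0 ≤ ξ i ω)
    (h p : ℝ)
    (n a : ℕ) :
    {y : ℝ | ((a : ℝ) + 1) * p / (h + p) ≤ ∑ k ∈ Finset.Icc 1 (a + 1), cdf μ ξ n k y} ⊆
      {y : ℝ | (a : ℝ) * p / (h + p) ≤ ∑ k ∈ Finset.Icc 1 a, cdf μ ξ n k y} ∧
    ({y : ℝ | ((a : ℝ) + 1) * p / (h + p) ≤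
        ∑ k ∈ Finset.Icc 1 (a + 1), cdf μ ξ n k y}.Nonempty →
      BddBelow {y : ℝ | (a : ℝ) * p / (h + p) ≤ ∑ k ∈ Finset.Icc 1 a, cdf μ ξ n k y} →
      sInf {y : ℝ | (a : ℝ) * p / (h + p) ≤ ∑ k ∈ Finset.Icc 1 a, cdf μ ξ n k y} ≤
        sInf {y : ℝ | ((a : ℝ) + 1) * p / (h + p) ≤
          ∑ k ∈ Finset.Icc 1 (a + 1), cdf μ ξ n k y}) := by
  have hsub : {y : ℝ | ((a : ℝ) + 1) * p / (h + p) ≤ ∑ k ∈ Finset.Icc 1 (a + 1), cdf μ ξ n k y} ⊆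
      {y : ℝ | (a : ℝ) * p / (h + p) ≤ ∑ k ∈ Finset.Icc 1 a, cdf μ ξ n k y} := by
    intro y hy
    simp only [Set.mem_ofPred_eq, mul_div_assoc] at hy ⊢
    exact mul_le_sum_Icc_of_succ_mul_le_sum_Icc
      (fun k hk => cdf_anti_of_ae_nonneg μ hpos n ((Finset.mem_Icc.1 hk).2.trans a.le_succ) y) hy
  exact ⟨hsub, fun hne hbdd => csInf_le_csInf hbdd hne hsub⟩

/-- Proposition 1(c): `S_{a+1} ⊆ S_a`, and consequently, if `S_{a+1}` is nonempty and
`S_a` is bounded below, then `y_{n,a} = inf S_a ≤ inf S_{a+1} = y_{n,a+1}`. -/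
theorem stmt2 {Ω : Type*} [MeasurableSpace Ω] (μ : Measure Ω) [IsProbabilityMeasure μ]
    (T : ℕ) (ξ : ℕ → Ω → ℝ)
    (hmeas : ∀ i, Measurable (ξ i)) (hint : ∀ i, Integrable (ξ i) μ)
    (hpos : ∀ i, ∀ᵐ ω ∂μ, 0 ≤ ξ i ω)
    (hind : iIndepFun ξ μ)
    (h p : ℝ) (hh : 0 < h) (hp : 0 < p)
    (n a : ℕ) (hn : 1 ≤ n) (ha : 1 ≤ a) (hna : n + a ≤ T) :
    {y : ℝ | ((a : ℝ) + 1) * p / (h + p) ≤ ∑ k ∈ Finset.Icc 1 (a + 1), cdf μ ξ n k y} ⊆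
      {y : ℝ | (a : ℝ) * p / (h + p) ≤ ∑ k ∈ Finset.Icc 1 a, cdf μ ξ n k y} ∧
    ({y : ℝ | ((a : ℝ) + 1) * p / (h + p) ≤
        ∑ k ∈ Finset.Icc 1 (a + 1), cdf μ ξ n k y}.Nonempty →
      BddBelow {y : ℝ | (a : ℝ) * p / (h + p) ≤ ∑ k ∈ Finset.Icc 1 a, cdf μ ξ n k y} →
      sInf {y : ℝ | (a : ℝ) * p / (h + p) ≤ ∑ k ∈ Finset.Icc 1 a, cdf μ ξ n k y} ≤
        sInf {y : ℝ | ((a : ℝ) + 1) * p / (h + p) ≤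
          ∑ k ∈ Finset.Icc 1 (a + 1), cdf μ ξ n k y}) :=
  stmt2_general μ ξ hpos h p n a
end

section
/- For any period n and cycle length a ≥ 1 with n + a ≤ T, and any reals y₁ ≤ y₂ ≤ y_{n,a}, the increments of the multi-period cost functions satisfy L_{n,a}(y₂) − L_{n,a}(y₁) ≥ L_{n,a+1}(y₂) − L_{n,a+1}(y₁); that is, L_{n,a} decreases at least as fast as L_{n,a+1} to the left of y_{n,a}. -/
open MeasureTheory ProbabilityTheory

/-! Splitting off the last summand, `L_{n,a+1} = L_{n,a} + G` with `G` the newsvendor cost of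
the demand `X = ξ_{n,a+1}`, so it suffices that `G(y₂) ≤ G(y₁)`. Since
`G(y) = (h+p)·E[(y−X)⁺] − p·(y − E X)` and `(y₂−x)⁺ − (y₁−x)⁺ ≤ (y₂−y₁)·1{x < y₂}`, this follows
from `P(X < y₂) ≤ p/(h+p)`. Below `y_{n,a}` the average of `φ_{n,1}, …, φ_{n,a}` is less than
`p/(h+p)`, so one of them is; as demands are nonnegative, `X ≥ ξ_{n,k}` for every `k ≤ a`, hence
`P(X ≤ t) < p/(h+p)` for all `t < y_{n,a}`, and letting `t ↑ y₂` gives the bound. -/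

open Finset Set Filter Topology

lemma acc_le_acc {Ω : Type*} {ξ : ℕ → Ω → ℝ} {ω : Ω} (hξ : ∀ i, 0 ≤ ξ i ω) (n : ℕ) {k l : ℕ}
    (hkl : k ≤ l) : acc ξ n k ω ≤ acc ξ n l ω :=
  sum_le_sum_of_subset_of_nonneg (range_subset_range.2 hkl) fun _ _ _ => hξ _

section

variable {Ω : Type*} [MeasurableSpace Ω] {μ : Measure Ω}

lemma measurable_acc {ξ : ℕ → Ω → ℝ} (hξ : ∀ i, Measurable (ξ i)) (n k : ℕ) :
    Measurable (acc ξ n k) :=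
  Finset.measurable_sum _ fun _ _ => hξ _

lemma integrable_acc {ξ : ℕ → Ω → ℝ} (hξ : ∀ i, Integrable (ξ i) μ) (n k : ℕ) :
    Integrable (acc ξ n k) μ :=
  integrable_finsetSum _ fun _ _ => hξ _

lemma cdf_le_cdf [IsFiniteMeasure μ] {ξ : ℕ → Ω → ℝ} (hξ : ∀ i, ∀ᵐ ω ∂μ, 0 ≤ ξ i ω)
    (n : ℕ) {k l : ℕ} (hkl : k ≤ l) (t : ℝ) : cdf μ ξ n l t ≤ cdf μ ξ n k t := by
  refine ENNReal.toReal_mono (measure_ne_top _ _) (measure_mono_ae ?_)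
  filter_upwards [ae_all_iff.2 hξ] with ω hω (hlt : acc ξ n l ω ≤ t)
  exact (acc_le_acc hω n hkl).trans hlt

lemma cdf_succ_lt_of_mem_lowerBounds [IsFiniteMeasure μ] {ξ : ℕ → Ω → ℝ}
    (hξ : ∀ i, ∀ᵐ ω ∂μ, 0 ≤ ξ i ω) {n a : ℕ} {c y t : ℝ}
    (hy : y ∈ lowerBounds {y : ℝ | (a : ℝ) * c ≤ ∑ k ∈ Icc 1 a, cdf μ ξ n k y})
    (ht : t < y) : cdf μ ξ n (a + 1) t < c := by
  have hsum : ∑ k ∈ Icc 1 a, cdf μ ξ n k t < ∑ k ∈ Icc 1 a, c := by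
    rw [sum_const, Nat.card_Icc, Nat.add_sub_cancel, nsmul_eq_mul]
    exact not_le.1 fun hmem => ht.not_ge (hy hmem)
  obtain ⟨k, hk, hlt⟩ := exists_lt_of_sum_lt hsum
  exact (cdf_le_cdf hξ n (by have := (mem_Icc.1 hk).2; omega) t).trans_lt hlt

lemma measureReal_lt_le_of_forall_lt [IsFiniteMeasure μ] {X : Ω → ℝ} {y c : ℝ}
    (hc : ∀ t < y, μ.real {ω | X ω ≤ t} ≤ c) : μ.real {ω | X ω < y} ≤ c := by
  obtain ⟨u, hu_mono, hu_lt, hu_lim⟩ := exists_seq_strictMono_tendsto y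
  have hunion : ⋃ m, {ω | X ω ≤ u m} = {ω | X ω < y} := by
    ext ω
    simpa using Set.ext_iff.1 (congrArg (X ⁻¹' ·)
      (iUnion_Iic_eq_Iio_of_lt_of_tendsto hu_lt hu_lim)) ω
  have hlim : Tendsto (fun m => μ.real {ω | X ω ≤ u m}) atTop (𝓝 (μ.real {ω | X ω < y})) := by
    rw [← hunion]
    exact (ENNReal.tendsto_toReal (measure_ne_top _ _)).comp
      (tendsto_measure_iUnion_atTop fun m m' hmm' ω (hω : X ω ≤ u m) =>
        hω.trans (hu_mono.monotone hmm'))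
  exact le_of_tendsto' hlim fun m => hc _ (hu_lt m)

noncomputable def newsvendorCost (μ : Measure Ω) (h p : ℝ) (X : Ω → ℝ) (y : ℝ) : ℝ :=
  h * ∫ ω, max (y - X ω) 0 ∂μ + p * ∫ ω, max (X ω - y) 0 ∂μ

lemma Lmp_succ (h p : ℝ) (ξ : ℕ → Ω → ℝ) (n a : ℕ) (y : ℝ) :
    Lmp μ h p ξ n (a + 1) y = Lmp μ h p ξ n a y + newsvendorCost μ h p (acc ξ n (a + 1)) y :=
  sum_Icc_succ_top (by omega) _

lemma newsvendorCost_eq [IsProbabilityMeasure μ] {X : Ω → ℝ} (hX : Integrable X μ)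
    (h p y : ℝ) :
    newsvendorCost μ h p X y =
      (h + p) * ∫ ω, max (y - X ω) 0 ∂μ - p * (y - ∫ ω, X ω ∂μ) := by
  have hshortage : ∫ ω, max (X ω - y) 0 ∂μ = ∫ ω, max (y - X ω) 0 ∂μ - (y - ∫ ω, X ω ∂μ) := by
    have hlin : Integrable (fun ω => y - X ω) μ := (integrable_const y).sub hX
    have hpart : ∀ ω, max (X ω - y) 0 = max (y - X ω) 0 - (y - X ω) := fun ω => by
      have := max_zero_sub_max_neg_zero_eq_self (X ω - y)
      rw [neg_sub] at this
      linarith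
    simp_rw [hpart]
    rw [integral_sub hlin.pos_part hlin, integral_sub (integrable_const y) hX,
      integral_const, probReal_univ, one_smul]
  rw [newsvendorCost, hshortage]
  ring

lemma integral_max_sub_max_le [IsFiniteMeasure μ] {X : Ω → ℝ} (hX : Measurable X)
    {y₁ y₂ : ℝ} (h12 : y₁ ≤ y₂) :
    ∫ ω, (max (y₂ - X ω) 0 - max (y₁ - X ω) 0) ∂μ ≤ (y₂ - y₁) * μ.real {ω | X ω < y₂} := by
  have hS : MeasurableSet {ω | X ω < y₂} := measurableSet_lt hX measurable_const
  rw [mul_comm, ← smul_eq_mul, ← integral_indicator_const _ hS]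
  refine integral_mono_of_nonneg (.of_forall fun ω => ?_)
    ((integrable_const _).indicator hS) (.of_forall fun ω => ?_)
  · exact sub_nonneg.2 (max_le_max (by linarith) le_rfl)
  · dsimp only
    by_cases hx : X ω < y₂
    · rw [indicator_of_mem (show ω ∈ {ω | X ω < y₂} from hx), sub_le_iff_le_add]
      exact max_le (by linarith [le_max_left (y₁ - X ω) 0])
        (by linarith [le_max_right (y₁ - X ω) 0])
    · rw [indicator_of_notMem (show ω ∉ {ω | X ω < y₂} from hx), max_eq_right (by linarith),
        max_eq_right (by linarith), sub_zero]

lemma newsvendorCost_le_of_measureReal_lt_le [IsProbabilityMeasure μ] {X : Ω → ℝ}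
    (hXm : Measurable X) (hX : Integrable X μ) {h p : ℝ} (hhp : 0 < h + p) {y₁ y₂ : ℝ}
    (h12 : y₁ ≤ y₂) (hP : μ.real {ω | X ω < y₂} ≤ p / (h + p)) :
    newsvendorCost μ h p X y₂ ≤ newsvendorCost μ h p X y₁ := by
  have hoverage : ∀ y, Integrable (fun ω => max (y - X ω) 0) μ :=
    fun y => ((integrable_const y).sub hX).pos_part
  have hdiff := integral_max_sub_max_le (μ := μ) hXm h12
  rw [integral_sub (hoverage y₂) (hoverage y₁)] at hdiff
  have hslope : (h + p) * (∫ ω, max (y₂ - X ω) 0 ∂μ - ∫ ω, max (y₁ - X ω) 0 ∂μ) ≤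
      p * (y₂ - y₁) :=
    calc _ ≤ (h + p) * ((y₂ - y₁) * μ.real {ω | X ω < y₂}) := by gcongr
      _ ≤ (h + p) * ((y₂ - y₁) * (p / (h + p))) := by gcongr
      _ = p * (y₂ - y₁) := by field_simp
  rw [newsvendorCost_eq hX, newsvendorCost_eq hX]
  linarith

end

theorem stmt3_general {Ω : Type*} [MeasurableSpace Ω] (μ : Measure Ω) [IsProbabilityMeasure μ]
    (ξ : ℕ → Ω → ℝ)
    (hmeas : ∀ i, Measurable (ξ i)) (hint : ∀ i, Integrable (ξ i) μ)
    (hpos : ∀ i, ∀ᵐ ω ∂μ, 0 ≤ ξ i ω)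
    (h p : ℝ) (hh : 0 < h) (hp : 0 < p)
    (n a : ℕ)
    (yna : ℝ)
    (hyna : IsLeast
      {y : ℝ | (a : ℝ) * p / (h + p) ≤ ∑ k ∈ Finset.Icc 1 a, cdf μ ξ n k y} yna)
    (y₁ y₂ : ℝ) (h12 : y₁ ≤ y₂) (h2 : y₂ ≤ yna) :
    Lmp μ h p ξ n (a + 1) y₂ - Lmp μ h p ξ n (a + 1) y₁ ≤
      Lmp μ h p ξ n a y₂ - Lmp μ h p ξ n a y₁ := by
  have hlower : yna ∈ lowerBounds
      {y : ℝ | (a : ℝ) * (p / (h + p)) ≤ ∑ k ∈ Icc 1 a, cdf μ ξ n k y} := by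
    simpa only [mul_div_assoc] using hyna.2
  have hfractile : μ.real {ω | acc ξ n (a + 1) ω < y₂} ≤ p / (h + p) :=
    measureReal_lt_le_of_forall_lt fun t ht =>
      (cdf_succ_lt_of_mem_lowerBounds hpos hlower (ht.trans_le h2)).le
  have hcost := newsvendorCost_le_of_measureReal_lt_le (measurable_acc hmeas n (a + 1))
    (integrable_acc hint n (a + 1)) (by linarith) h12 hfractile
  rw [Lmp_succ, Lmp_succ]
  linarith

/-- Proposition 1(d) in increment form: for `y₁ ≤ y₂ ≤ y_{n,a}`,
`L_{n,a}(y₂) − L_{n,a}(y₁) ≥ L_{n,a+1}(y₂) − L_{n,a+1}(y₁)`. -/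
theorem stmt3 {Ω : Type*} [MeasurableSpace Ω] (μ : Measure Ω) [IsProbabilityMeasure μ]
    (T : ℕ) (ξ : ℕ → Ω → ℝ)
    (hmeas : ∀ i, Measurable (ξ i)) (hint : ∀ i, Integrable (ξ i) μ)
    (hpos : ∀ i, ∀ᵐ ω ∂μ, 0 ≤ ξ i ω)
    (hind : iIndepFun ξ μ)
    (h p : ℝ) (hh : 0 < h) (hp : 0 < p)
    (n a : ℕ) (hn : 1 ≤ n) (ha : 1 ≤ a) (hna : n + a ≤ T)
    (yna : ℝ)
    (hyna : IsLeast
      {y : ℝ | (a : ℝ) * p / (h + p) ≤ ∑ k ∈ Finset.Icc 1 a, cdf μ ξ n k y} yna)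
    (y₁ y₂ : ℝ) (h12 : y₁ ≤ y₂) (h2 : y₂ ≤ yna) :
    Lmp μ h p ξ n (a + 1) y₂ - Lmp μ h p ξ n (a + 1) y₁ ≤
      Lmp μ h p ξ n a y₂ - Lmp μ h p ξ n a y₁ :=
  stmt3_general μ ξ hmeas hint hpos h p hh hp n a yna hyna y₁ y₂ h12 h2
end

section
/- Let f, g : ℝ → ℝ, let x_f ∈ ℝ be a global minimizer of f, and let v ∈ ℝ satisfy f(x_f) ≤ v. Suppose f(x_f) ≤ g(x_f) and that for all reals y₁ ≤ y₂ ≤ x_f one has f(y₂) − f(y₁) ≥ g(y₂) − g(y₁). Then for every s ∈ ℝ with g(s) ≤ v there exists s′ ≤ s with f(s′) ≤ v; consequently, if the set { y : g(y) ≤ v } is nonempty and { y : f(y) ≤ v } is bounded below, then inf { y : f(y) ≤ v } ≤ inf { y : g(y) ≤ v }. -/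
/-- Abstract comparison lemma: if `f` has global minimizer `x_f` with `f(x_f) ≤ v`,
`f(x_f) ≤ g(x_f)`, and `f` decreases at least as fast as `g` to the left of `x_f`, then
every `s` with `g(s) ≤ v` admits `s' ≤ s` with `f(s') ≤ v`; consequently,
`inf {y : f(y) ≤ v} ≤ inf {y : g(y) ≤ v}` whenever the latter set is nonempty and the
former is bounded below. -/
theorem stmt10 (f g : ℝ → ℝ) (x_f v : ℝ)
    (hmin : ∀ y, f x_f ≤ f y) (hfv : f x_f ≤ v) (hfg : f x_f ≤ g x_f)
    (hincr : ∀ y₁ y₂, y₁ ≤ y₂ → y₂ ≤ x_f → g y₂ - g y₁ ≤ f y₂ - f y₁) :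
    (∀ s : ℝ, g s ≤ v → ∃ s' : ℝ, s' ≤ s ∧ f s' ≤ v) ∧
    ({y : ℝ | g y ≤ v}.Nonempty → BddBelow {y : ℝ | f y ≤ v} →
      sInf {y : ℝ | f y ≤ v} ≤ sInf {y : ℝ | g y ≤ v}) := by
  have key : ∀ s : ℝ, g s ≤ v → ∃ s' : ℝ, s' ≤ s ∧ f s' ≤ v := by
    intro s hs
    rcases le_total s x_f with h | h
    · refine ⟨s, le_refl s, ?_⟩
      have := hincr s x_f h le_rfl
      linarith
    · exact ⟨x_f, h, hfv⟩
  refine ⟨key, fun hne hbd => ?_⟩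
  apply le_csInf hne
  intro s hs
  obtain ⟨s', hs', hfs'⟩ := key s hs
  exact le_trans (csInf_le hbd hfs') hs'
end

section
/- For any period n and cycle length a ≥ 1 with n + a − 1 ≤ T, suppose the set S = { y ∈ ℝ : Σ_{k=1}^{a} φ_{n,k}(y) ≥ a·p/(h+p) } is nonempty and bounded below, and let y_{n,a} = inf S. Then y_{n,a} is a global minimizer of the multi-period cost function: L_{n,a}(y_{n,a}) ≤ L_{n,a}(y) for every real y. -/
open MeasureTheory ProbabilityTheory

/-!
For `y ≤ z`, `(z - x)⁺ - (y - x)⁺ = ∫_{(y,z]} 1{x ≤ t} dt` and `(x - c)⁺ - (c - x)⁺ = x - c`;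
taking expectations and swapping the integrals (Fubini) gives, with `Φ t = Σ_k φ_{n,k}(t)`,
`L_{n,a}(z) - L_{n,a}(y) = ∫_{(y,z]} ((h + p) Φ t - a p) dt`.
The integrand is nondecreasing and is nonnegative exactly on `S`, hence it is `≥ 0` to the right
of `inf S` and `< 0` to the left of it: `L_{n,a}` decreases up to `inf S` and increases after it.
-/

open Set

theorem apply_csInf_le_of_sub_eq_setIntegral {f g : ℝ → ℝ}
    (hfg : ∀ y z, y ≤ z → f z - f y = ∫ t in Ioc y z, g t) (hg : Monotone g)
    (hne : {t | 0 ≤ g t}.Nonempty) (hbdd : BddBelow {t | 0 ≤ g t}) (z : ℝ) :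
    f (sInf {t | 0 ≤ g t}) ≤ f z := by
  set y₀ := sInf {t | 0 ≤ g t}
  rcases le_or_gt y₀ z with hz | hz
  · have : 0 ≤ ∫ t in Ioc y₀ z, g t := setIntegral_nonneg measurableSet_Ioc fun t ht => by
      obtain ⟨s, hs, hst⟩ := (csInf_lt_iff hbdd hne).1 ht.1
      exact hs.trans (hg hst.le)
    linarith [hfg y₀ z hz]
  · have : ∫ t in Ioc z y₀, g t ≤ 0 := by
      -- `y₀` itself may lie in the set, so integrate over the open interval instead
      rw [← Measure.restrict_congr_set Ioo_ae_eq_Ioc]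
      refine setIntegral_nonpos measurableSet_Ioo fun t ht => ?_
      have : t ∉ {t | 0 ≤ g t} := notMem_of_lt_csInf ht.2 hbdd
      exact (lt_of_not_ge this).le
    linarith [hfg z y₀ hz.le]

theorem setIntegral_Ioc_indicator_Ici_one {x y z : ℝ} (hyz : y ≤ z) :
    ∫ t in Ioc y z, (Ici x).indicator 1 t = max (z - x) 0 - max (y - x) 0 := by
  rw [integral_indicator_one measurableSet_Ici, measureReal_restrict_apply measurableSet_Ici,
    inter_comm, measureReal_congr ((ae_eq_refl _).inter Ioi_ae_eq_Ici).symm, Ioc_inter_Ioi,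
    Real.volume_real_Ioc]
  simp only [max_def]
  split_ifs <;> linarith

section Newsvendor

variable {Ω : Type*} [MeasurableSpace Ω] {μ : Measure Ω} {X : Ω → ℝ}

theorem monotone_measureReal_setOf_le [IsFiniteMeasure μ] (X : Ω → ℝ) :
    Monotone fun t => μ.real {ω | X ω ≤ t} :=
  fun _ _ hst => measureReal_mono fun _ hω => le_trans hω hst

theorem integral_max_sub_sub_integral_max_sub_eq_setIntegral [IsFiniteMeasure μ]
    (hX : Measurable X) (hXi : Integrable X μ) {y z : ℝ} (hyz : y ≤ z) :
    ∫ ω, max (z - X ω) 0 ∂μ - ∫ ω, max (y - X ω) 0 ∂μ = ∫ t in Ioc y z, μ.real {ω | X ω ≤ t} := by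
  set f : Ω → ℝ → ℝ := fun ω t => {q : Ω × ℝ | X q.1 ≤ q.2}.indicator 1 (ω, t)
  have hf : Integrable (Function.uncurry f) (μ.prod (volume.restrict (Ioc y z))) :=
    (integrable_const (1 : ℝ)).indicator (measurableSet_le (hX.comp measurable_fst) measurable_snd)
  have hz : Integrable (fun ω => max (z - X ω) 0) μ := ((integrable_const z).sub hXi).pos_part
  have hy : Integrable (fun ω => max (y - X ω) 0) μ := ((integrable_const y).sub hXi).pos_part
  calc _ = ∫ ω, (∫ t in Ioc y z, f ω t) ∂μ := by
        rw [← integral_sub hz hy]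
        exact integral_congr_ae (.of_forall fun ω => (setIntegral_Ioc_indicator_Ici_one hyz).symm)
    _ = ∫ t in Ioc y z, ∫ ω, f ω t ∂μ := integral_integral_swap hf
    _ = _ := integral_congr_ae (.of_forall fun t =>
        integral_indicator_one (measurableSet_le hX measurable_const))

theorem integral_max_sub_sub_integral_max_sub_eq_integral_sub [IsProbabilityMeasure μ]
    (hXi : Integrable X μ) (c : ℝ) :
    ∫ ω, max (X ω - c) 0 ∂μ - ∫ ω, max (c - X ω) 0 ∂μ = ∫ ω, X ω ∂μ - c := by
  have hpos : Integrable (fun ω => max (X ω - c) 0) μ := (hXi.sub (integrable_const c)).pos_part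
  have hneg : Integrable (fun ω => max (c - X ω) 0) μ := ((integrable_const c).sub hXi).pos_part
  rw [← integral_sub hpos hneg]
  simp_rw [← neg_sub (X _) c, max_zero_sub_max_neg_zero_eq_self]
  rw [integral_sub hXi (integrable_const c), integral_const, probReal_univ, one_smul]

theorem newsvendorCost_sub_eq_setIntegral [IsProbabilityMeasure μ] (hX : Measurable X)
    (hXi : Integrable X μ) (h p : ℝ) {y z : ℝ} (hyz : y ≤ z) :
    (h * ∫ ω, max (z - X ω) 0 ∂μ + p * ∫ ω, max (X ω - z) 0 ∂μ) -
      (h * ∫ ω, max (y - X ω) 0 ∂μ + p * ∫ ω, max (X ω - y) 0 ∂μ) =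
      ∫ t in Ioc y z, ((h + p) * μ.real {ω | X ω ≤ t} - p) := by
  rw [integral_sub (((monotone_measureReal_setOf_le X).intervalIntegrable.1).const_mul _)
    (integrable_const p), integral_const_mul, setIntegral_const, Real.volume_real_Ioc_of_le hyz,
    smul_eq_mul]
  linear_combination (h + p) * integral_max_sub_sub_integral_max_sub_eq_setIntegral hX hXi hyz
    + p * integral_max_sub_sub_integral_max_sub_eq_integral_sub hXi z
    - p * integral_max_sub_sub_integral_max_sub_eq_integral_sub hXi y

theorem monotone_sum_cdf [IsFiniteMeasure μ] (ξ : ℕ → Ω → ℝ) (n a : ℕ) :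
    Monotone fun t => ∑ k ∈ Finset.Icc 1 a, cdf μ ξ n k t :=
  fun _ _ hst => Finset.sum_le_sum fun k _ => monotone_measureReal_setOf_le (acc ξ n k) hst

theorem Lmp_sub_eq_setIntegral [IsProbabilityMeasure μ] {ξ : ℕ → Ω → ℝ}
    (hmeas : ∀ i, Measurable (ξ i)) (hint : ∀ i, Integrable (ξ i) μ) (h p : ℝ) (n a : ℕ)
    {y z : ℝ} (hyz : y ≤ z) :
    Lmp μ h p ξ n a z - Lmp μ h p ξ n a y =
      ∫ t in Ioc y z, ((h + p) * ∑ k ∈ Finset.Icc 1 a, cdf μ ξ n k t - a * p) := by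
  have hacc : ∀ k, Measurable (acc ξ n k) := fun k =>
    Finset.measurable_sum _ fun i _ => hmeas (n + i)
  have hacci : ∀ k, Integrable (acc ξ n k) μ := fun k =>
    integrable_finsetSum _ fun i _ => hint (n + i)
  have hF : ∀ k, IntegrableOn (fun t => (h + p) * μ.real {ω | acc ξ n k ω ≤ t} - p) (Ioc y z) :=
    fun k => (((monotone_measureReal_setOf_le (acc ξ n k)).intervalIntegrable.1).const_mul _).sub
      (integrable_const p)
  rw [Lmp, Lmp, ← Finset.sum_sub_distrib, Finset.sum_congr rfl fun k _ =>
    newsvendorCost_sub_eq_setIntegral (hacc k) (hacci k) h p hyz,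
    ← integral_finsetSum _ fun k _ => hF k]
  congr with t
  rw [Finset.sum_sub_distrib, Finset.sum_const, Nat.card_Icc, Nat.add_sub_cancel, nsmul_eq_mul,
    Finset.mul_sum]
  rfl

end Newsvendor

theorem stmt12_general {Ω : Type*} [MeasurableSpace Ω] (μ : Measure Ω) [IsProbabilityMeasure μ]
    (ξ : ℕ → Ω → ℝ)
    (hmeas : ∀ i, Measurable (ξ i)) (hint : ∀ i, Integrable (ξ i) μ)
    (h p : ℝ) (hh : 0 < h) (hp : 0 < p)
    (n a : ℕ)
    (hne : {y : ℝ | (a : ℝ) * p / (h + p) ≤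
      ∑ k ∈ Finset.Icc 1 a, cdf μ ξ n k y}.Nonempty)
    (hbdd : BddBelow {y : ℝ | (a : ℝ) * p / (h + p) ≤
      ∑ k ∈ Finset.Icc 1 a, cdf μ ξ n k y}) :
    ∀ z : ℝ,
      Lmp μ h p ξ n a
        (sInf {y : ℝ | (a : ℝ) * p / (h + p) ≤ ∑ k ∈ Finset.Icc 1 a, cdf μ ξ n k y}) ≤
      Lmp μ h p ξ n a z := by
  have hhp : 0 < h + p := add_pos hh hp
  have hS : {y : ℝ | (a : ℝ) * p / (h + p) ≤ ∑ k ∈ Finset.Icc 1 a, cdf μ ξ n k y} =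
      {t | 0 ≤ (h + p) * ∑ k ∈ Finset.Icc 1 a, cdf μ ξ n k t - a * p} := by
    ext t
    exact (div_le_iff₀' hhp).trans sub_nonneg.symm
  rw [hS] at hne hbdd ⊢
  exact apply_csInf_le_of_sub_eq_setIntegral
    (fun y z hyz => Lmp_sub_eq_setIntegral hmeas hint h p n a hyz)
    (((monotone_sum_cdf ξ n a).const_mul hhp.le).add_const _) hne hbdd

/-- If `S = {y : Σ_{k=1}^{a} φ_{n,k}(y) ≥ a·p/(h+p)}` is nonempty and bounded below, then
`y_{n,a} = inf S` is a global minimizer of the multi-period cost function `L_{n,a}`. -/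
theorem stmt12 {Ω : Type*} [MeasurableSpace Ω] (μ : Measure Ω) [IsProbabilityMeasure μ]
    (T : ℕ) (ξ : ℕ → Ω → ℝ)
    (hmeas : ∀ i, Measurable (ξ i)) (hint : ∀ i, Integrable (ξ i) μ)
    (hpos : ∀ i, ∀ᵐ ω ∂μ, 0 ≤ ξ i ω)
    (hind : iIndepFun ξ μ)
    (h p : ℝ) (hh : 0 < h) (hp : 0 < p)
    (n a : ℕ) (hn : 1 ≤ n) (ha : 1 ≤ a) (hna : n + a - 1 ≤ T)
    (hne : {y : ℝ | (a : ℝ) * p / (h + p) ≤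
      ∑ k ∈ Finset.Icc 1 a, cdf μ ξ n k y}.Nonempty)
    (hbdd : BddBelow {y : ℝ | (a : ℝ) * p / (h + p) ≤
      ∑ k ∈ Finset.Icc 1 a, cdf μ ξ n k y}) :
    ∀ z : ℝ,
      Lmp μ h p ξ n a
        (sInf {y : ℝ | (a : ℝ) * p / (h + p) ≤ ∑ k ∈ Finset.Icc 1 a, cdf μ ξ n k y}) ≤
      Lmp μ h p ξ n a z :=
  stmt12_general μ ξ hmeas hint h p hh hp n a hne hbdd
end

section
/- Let ξ be an integrable real-valued random variable with cumulative distribution function φ(y) = P(ξ ≤ y). Then the function F(y) = E[max(y − ξ, 0)] has at every point y a right derivative (derivative within [y, ∞)) equal to φ(y). -/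
open MeasureTheory Filter Set Topology

/-! The difference quotients of `z ↦ (z - x)⁺` are bounded by `1`, and from the right at `y`
they converge to `𝟙{x ≤ y}`; dominated convergence therefore gives the right derivative
`E[𝟙{ξ ≤ y}] = P(ξ ≤ y)`. -/

section ParametricIntegral

variable {Ω E : Type*} [MeasurableSpace Ω] {μ : Measure Ω}
  [NormedAddCommGroup E] [NormedSpace ℝ E]

theorem hasDerivWithinAt_integral_of_dominated_slope {F : ℝ → Ω → E} {F' : Ω → E}
    {s : Set ℝ} {y : ℝ} {bound : Ω → ℝ}
    (hF_int : ∀ᶠ z in 𝓝[s \ {y}] y, Integrable (F z) μ) (hFy_int : Integrable (F y) μ)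
    (h_bound : ∀ᶠ z in 𝓝[s \ {y}] y, ∀ᵐ ω ∂μ, ‖slope (F · ω) y z‖ ≤ bound ω)
    (bound_integrable : Integrable bound μ)
    (h_diff : ∀ᵐ ω ∂μ, HasDerivWithinAt (F · ω) (F' ω) s y) :
    HasDerivWithinAt (fun z => ∫ ω, F z ω ∂μ) (∫ ω, F' ω ∂μ) s y := by
  rw [hasDerivWithinAt_iff_tendsto_slope]
  have h_slope : ∀ᶠ z in 𝓝[s \ {y}] y,
      ∫ ω, slope (F · ω) y z ∂μ = slope (fun z => ∫ ω, F z ω ∂μ) y z := by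
    filter_upwards [hF_int] with z hz
    simp only [slope_def_module, integral_smul, integral_sub hz hFy_int]
  refine (tendsto_integral_filter_of_dominated_convergence bound ?_ h_bound bound_integrable
    ?_).congr' h_slope
  · filter_upwards [hF_int] with z hz
    exact ((hz.sub hFy_int).smul (z - y)⁻¹).aestronglyMeasurable
  · filter_upwards [h_diff] with ω hω
    exact hasDerivWithinAt_iff_tendsto_slope.mp hω

end ParametricIntegral

theorem hasDerivWithinAt_max_sub_zero_Ici (x y : ℝ) :
    HasDerivWithinAt (fun z : ℝ => max (z - x) 0) ((Iic y).indicator 1 x) (Ici y) y := by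
  by_cases hxy : x ≤ y
  · rw [indicator_of_mem (mem_Iic.mpr hxy), Pi.one_apply]
    refine ((hasDerivAt_id y).sub_const x).hasDerivWithinAt.congr (fun z hz => ?_) ?_
    · exact max_eq_left (by linarith [mem_Ici.mp hz])
    · exact max_eq_left (by linarith)
  · rw [indicator_of_notMem (notMem_Iic.mpr (not_le.mp hxy))]
    refine ((hasDerivAt_const y (0 : ℝ)).congr_of_eventuallyEq ?_).hasDerivWithinAt
    filter_upwards [Iio_mem_nhds (not_le.mp hxy)] with z hz
    exact max_eq_right (by linarith [mem_Iio.mp hz])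

theorem norm_slope_max_sub_zero_le_one (x y z : ℝ) :
    ‖slope (fun t : ℝ => max (t - x) 0) y z‖ ≤ 1 := by
  rw [slope_def_field, Real.norm_eq_abs, abs_div]
  exact div_le_one_of_le₀ ((abs_max_sub_max_le_abs _ _ _).trans_eq (by ring_nf)) (abs_nonneg _)

/-- For an integrable random variable `ξ` with cdf `φ(y) = P(ξ ≤ y)`, the function
`F(y) = E[(y − ξ)⁺]` has right derivative `φ(y)` at every point `y`. -/
theorem stmt13 {Ω : Type*} [MeasurableSpace Ω] (μ : Measure Ω) [IsProbabilityMeasure μ]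
    (ξ : Ω → ℝ) (hξ : Integrable ξ μ) (y : ℝ) :
    HasDerivWithinAt (fun z : ℝ => ∫ ω, max (z - ξ ω) 0 ∂μ)
      ((μ {ω | ξ ω ≤ y}).toReal) (Set.Ici y) y := by
  have h_int : ∀ z : ℝ, Integrable (fun ω => max (z - ξ ω) 0) μ := fun z =>
    ((integrable_const z).sub hξ).pos_part
  have h_cdf : ∫ ω, (Iic y).indicator 1 (ξ ω) ∂μ = (μ {ω | ξ ω ≤ y}).toReal := by
    change ∫ ω, (ξ ⁻¹' Iic y).indicator 1 ω ∂μ = _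
    rw [integral_indicator₀ (hξ.aemeasurable.nullMeasurableSet_preimage measurableSet_Iic)]
    simp [measureReal_def, preimage]
  rw [← h_cdf]
  exact hasDerivWithinAt_integral_of_dominated_slope (Eventually.of_forall h_int) (h_int y)
    (Eventually.of_forall fun z => ae_of_all _ fun ω => norm_slope_max_sub_zero_le_one _ _ _)
    (integrable_const 1) (ae_of_all _ fun ω => hasDerivWithinAt_max_sub_zero_Ici _ _)
end

section
/- For any period n and cycle length a ≥ 1 with n + a − 1 ≤ T, the multi-period cost function L_{n,a}(y) = Σ_{k=1}^{a} ( h · E[max(y − ξ_{n,k}, 0)] + p · E[max(ξ_{n,k} − y, 0)] ) has at every point y a right derivative (derivative within [y, ∞)) equal to −a·p + (h+p) · Σ_{k=1}^{a} φ_{n,k}(y). -/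
open MeasureTheory ProbabilityTheory

/-!
Each summand of `L_{n,a}` is an integral of a `1`-Lipschitz function of `y`, so by dominated
convergence applied to difference quotients its right derivative may be taken under the integral.
Pointwise, `y ↦ (y - x)⁺` has right derivative `1_{x ≤ y}`, which integrates to `φ_{n,k}(y)`, and
`(x - y)⁺ = (y - x)⁺ - (y - x)` has right derivative `1_{x ≤ y} - 1`, which integrates to
`φ_{n,k}(y) - 1`.
-/

open Filter Set Topology
open scoped NNReal

theorem hasDerivWithinAt_integral_of_lipschitzWith {Ω E : Type*} [MeasurableSpace Ω]
    {μ : Measure Ω} [IsFiniteMeasure μ] [NormedAddCommGroup E] [NormedSpace ℝ E]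
    {F : ℝ → Ω → E} {F' : Ω → E} {s : Set ℝ} {y : ℝ} {K : ℝ≥0}
    (hF_int : ∀ z, Integrable (F z) μ) (hF_lip : ∀ ω, LipschitzWith K (F · ω))
    (hF' : ∀ ω, HasDerivWithinAt (F · ω) (F' ω) s y) :
    HasDerivWithinAt (fun z => ∫ ω, F z ω ∂μ) (∫ ω, F' ω ∂μ) s y := by
  simp only [hasDerivWithinAt_iff_tendsto_slope] at hF' ⊢
  have hslope : ∀ z, ∫ ω, slope (F · ω) y z ∂μ = slope (fun z => ∫ ω, F z ω ∂μ) y z := by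
    intro z
    simp only [slope_def_module]
    rw [integral_smul, integral_sub (hF_int z) (hF_int y)]
  refine (tendsto_integral_filter_of_dominated_convergence (fun _ => K)
    (Eventually.of_forall fun z => ?_) (Eventually.of_forall fun z => ae_of_all _ fun ω => ?_)
    (integrable_const _) (ae_of_all _ hF')).congr hslope
  · simp only [slope_def_module]
    exact (((hF_int z).sub (hF_int y)).smul ((z - y)⁻¹)).aestronglyMeasurable
  · rw [slope_def_module, norm_smul, norm_inv]
    rcases eq_or_ne z y with rfl | hzy
    · simp
    · rw [inv_mul_le_iff₀ (norm_pos_iff.mpr (sub_ne_zero.mpr hzy)), mul_comm]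
      simpa [dist_eq_norm] using (hF_lip ω).dist_le_mul z y

theorem hasDerivWithinAt_posPart_sub_Ici (x y : ℝ) :
    HasDerivWithinAt (fun z => max (z - x) 0) ((Iic y).indicator 1 x) (Ici y) y := by
  by_cases hxy : x ≤ y
  · rw [indicator_of_mem (mem_Iic.2 hxy)]
    refine ((hasDerivWithinAt_id y _).sub_const x).congr (fun z hz => ?_) ?_
    · exact max_eq_left (by simp at hz; linarith)
    · exact max_eq_left (by linarith)
  · rw [indicator_of_notMem (by simpa using hxy)]
    refine (hasDerivAt_const y (0 : ℝ)).hasDerivWithinAt.congr_of_eventuallyEq ?_ ?_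
    · filter_upwards [nhdsWithin_le_nhds (Iio_mem_nhds (not_le.1 hxy))] with z hz
      exact max_eq_right (by simp at hz; linarith)
    · exact max_eq_right (by linarith)

theorem hasDerivWithinAt_sub_posPart_Ici (x y : ℝ) :
    HasDerivWithinAt (fun z => max (x - z) 0) ((Iic y).indicator 1 x - 1) (Ici y) y := by
  have hsplit : (fun z => max (x - z) 0) = fun z => max (z - x) 0 - (z - x) := by
    funext z
    rcases le_total x z with hxz | hzx
    · rw [max_eq_right (by linarith), max_eq_left (by linarith)]; ring
    · rw [max_eq_left (by linarith), max_eq_right (by linarith)]; ring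
  rw [hsplit]
  exact (hasDerivWithinAt_posPart_sub_Ici x y).fun_sub ((hasDerivWithinAt_id y _).sub_const x)

section Integral

variable {Ω : Type*} [MeasurableSpace Ω] {μ : Measure Ω} {X : Ω → ℝ}

theorem integral_indicator_Iic_one (hX : AEMeasurable X μ) (y : ℝ) :
    ∫ ω, (Iic y).indicator 1 (X ω) ∂μ = μ.real {ω | X ω ≤ y} := by
  change ∫ ω, (X ⁻¹' Iic y).indicator (fun _ => (1 : ℝ)) ω ∂μ = _
  rw [integral_indicator₀ (hX.nullMeasurable measurableSet_Iic), setIntegral_const, smul_eq_mul,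
    mul_one]
  rfl

theorem hasDerivWithinAt_integral_posPart_sub_Ici [IsFiniteMeasure μ] (hX : Integrable X μ)
    (y : ℝ) :
    HasDerivWithinAt (fun z => ∫ ω, max (z - X ω) 0 ∂μ) (μ.real {ω | X ω ≤ y}) (Ici y) y := by
  rw [← integral_indicator_Iic_one hX.aemeasurable]
  exact hasDerivWithinAt_integral_of_lipschitzWith (F := fun z ω => max (z - X ω) 0)
    (fun z => ((integrable_const z).sub hX).pos_part)
    (fun ω => (IsometryEquiv.subRight (X ω)).isometry.lipschitz.max_const 0)
    (fun ω => hasDerivWithinAt_posPart_sub_Ici (X ω) y)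

theorem hasDerivWithinAt_integral_sub_posPart_Ici [IsProbabilityMeasure μ] (hX : Integrable X μ)
    (y : ℝ) :
    HasDerivWithinAt (fun z => ∫ ω, max (X ω - z) 0 ∂μ) (μ.real {ω | X ω ≤ y} - 1) (Ici y) y := by
  have hF' := hasDerivWithinAt_integral_of_lipschitzWith (F := fun z ω => max (X ω - z) 0)
    (fun z => (hX.sub (integrable_const z)).pos_part)
    (fun ω => (IsometryEquiv.subLeft (X ω)).isometry.lipschitz.max_const 0)
    (fun ω => hasDerivWithinAt_sub_posPart_Ici (X ω) y)
  have hindicator : Integrable (fun ω => (Iic y).indicator 1 (X ω)) μ :=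
    (integrable_const (1 : ℝ)).indicator₀ (hX.aemeasurable.nullMeasurable measurableSet_Iic)
  rwa [integral_sub hindicator (integrable_const 1), integral_indicator_Iic_one hX.aemeasurable,
    integral_const, probReal_univ, one_smul] at hF'

end Integral

theorem stmt14_general {Ω : Type*} [MeasurableSpace Ω] (μ : Measure Ω) [IsProbabilityMeasure μ]
    (ξ : ℕ → Ω → ℝ) (hint : ∀ i, Integrable (ξ i) μ)
    (h p : ℝ) (n a : ℕ) (y : ℝ) :
    HasDerivWithinAt (Lmp μ h p ξ n a)
      (-(a : ℝ) * p + (h + p) * ∑ k ∈ Finset.Icc 1 a, cdf μ ξ n k y)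
      (Set.Ici y) y := by
  have hacc : ∀ k, Integrable (acc ξ n k) μ := fun k =>
    integrable_finsetSum _ fun i _ => hint (n + i)
  refine (HasDerivWithinAt.fun_sum fun k (_ : k ∈ Finset.Icc 1 a) =>
    ((hasDerivWithinAt_integral_posPart_sub_Ici (hacc k) y).const_mul h).fun_add
      ((hasDerivWithinAt_integral_sub_posPart_Ici (hacc k) y).const_mul p)).congr_deriv ?_
  -- `_root_` because `ProbabilityTheory.cdf` is also in scope
  simp only [_root_.cdf, mul_sub, mul_one, Finset.sum_add_distrib, Finset.sum_sub_distrib,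
    Finset.sum_const, Nat.card_Icc, Nat.add_sub_cancel, nsmul_eq_mul, ← Finset.mul_sum,
    measureReal_def]
  ring

/-- The multi-period cost function `L_{n,a}` has right derivative
`−a·p + (h+p)·Σ_{k=1}^{a} φ_{n,k}(y)` at every point `y`. -/
theorem stmt14 {Ω : Type*} [MeasurableSpace Ω] (μ : Measure Ω) [IsProbabilityMeasure μ]
    (T : ℕ) (ξ : ℕ → Ω → ℝ)
    (hmeas : ∀ i, Measurable (ξ i)) (hint : ∀ i, Integrable (ξ i) μ)
    (hpos : ∀ i, ∀ᵐ ω ∂μ, 0 ≤ ξ i ω)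
    (hind : iIndepFun ξ μ)
    (h p : ℝ) (hh : 0 < h) (hp : 0 < p)
    (n a : ℕ) (hn : 1 ≤ n) (ha : 1 ≤ a) (hna : n + a - 1 ≤ T) (y : ℝ) :
    HasDerivWithinAt (Lmp μ h p ξ n a)
      (-(a : ℝ) * p + (h + p) * ∑ k ∈ Finset.Icc 1 a, cdf μ ξ n k y)
      (Set.Ici y) y :=
  stmt14_general μ ξ hint h p n a y
end
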